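/- arXiv:cs/0102003 — 4 statements merged into one kernel-verified Lean document; each statement's English description precedes it below -/
import Mathlib

section
/- For a stock price following a binomial tree with n periods, uptick factor u, downtick factor d, uptick probability p, if two paths ω_X and ω_Y differ in exactly one step (ω_X has an uptick where ω_Y has a downtick, with u = 1/d), then the ratio of running totals satisfies T_n(ω_X)/T_n(ω_Y) ≤ u², and hence |ln T_n(ω_X) − ln T_n(ω_Y)| ≤ 2 ln u. -/
/-! Flipping step `j` from a downtick to an uptick multiplies `S_t` by `u²` for `t > j` and leaves
it unchanged for `t ≤ j`, so termwise `T_n(ωY) ≤ T_n(ωX) ≤ u² T_n(ωY)`. -/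

open Finset

lemma sum_eq_sum_add_ite_of_forall_ne {ι M : Type*} [AddCommGroup M] [DecidableEq ι]
    (s : Finset ι) {f g : ι → M} {j : ι} (h : ∀ i ≠ j, f i = g i) :
    ∑ i ∈ s, f i = ∑ i ∈ s, g i + if j ∈ s then f j - g j else 0 := by
  have hdiff : ∀ i, f i - g i = if j = i then f j - g j else 0 := by
    intro i
    by_cases hij : j = i
    · subst hij; simp
    · simp [hij, h i (Ne.symm hij)]
  rw [← sub_eq_iff_eq_add', ← sum_sub_distrib, sum_congr rfl fun i _ => hdiff i, sum_ite_eq]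

lemma sum_le_sum_le_sum_add_of_forall_ne {ι M : Type*} [AddCommGroup M] [PartialOrder M]
    [IsOrderedAddMonoid M] (s : Finset ι) {f g : ι → M} {j : ι} (hj : g j ≤ f j)
    (h : ∀ i ≠ j, f i = g i) :
    ∑ i ∈ s, g i ≤ ∑ i ∈ s, f i ∧ ∑ i ∈ s, f i ≤ ∑ i ∈ s, g i + (f j - g j) := by
  classical
  have hj' : 0 ≤ f j - g j := sub_nonneg.2 hj
  rw [sum_eq_sum_add_ite_of_forall_ne s h]
  split_ifs <;> constructor <;> simp [hj']

lemma abs_log_sub_log_le_log_of_le_of_div_le {x y c : ℝ} (hy : 0 < y) (hyx : y ≤ x)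
    (hc : x / y ≤ c) : |Real.log x - Real.log y| ≤ Real.log c := by
  have hxy : 1 ≤ x / y := (one_le_div hy).2 hyx
  rw [← Real.log_div (hy.trans_le hyx).ne' hy.ne', abs_of_nonneg (Real.log_nonneg hxy)]
  exact Real.log_le_log (one_pos.trans_le hxy) hc

theorem running_total_bounded_difference_general (n : ℕ) (S₀ u : ℝ) (hS₀ : 0 < S₀) (hu : 1 < u)
    (ωX ωY : Fin n → ℤ)
    (j : Fin n) (hjX : ωX j = 1) (hjY : ωY j = -1)
    (hother : ∀ i, i ≠ j → ωX i = ωY i)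
    (T : (Fin n → ℤ) → ℝ)
    (hT : ∀ ω, T ω = ∑ t ∈ Finset.range (n + 1),
        S₀ * u ^ (∑ i ∈ Finset.univ.filter (fun i : Fin n => (i : ℕ) < t), ω i)) :
    T ωX / T ωY ≤ u ^ 2 ∧
    |Real.log (T ωX) - Real.log (T ωY)| ≤ 2 * Real.log u := by
  have hu0 : 0 < u := one_pos.trans hu
  have hexp (t : ℕ) := sum_le_sum_le_sum_add_of_forall_ne
    (univ.filter (fun i : Fin n => (i : ℕ) < t)) (by omega) hother
  norm_num [hjX, hjY] at hexp
  have hYX : T ωY ≤ T ωX := by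
    rw [hT, hT]
    refine sum_le_sum fun t _ => ?_
    gcongr S₀ * ?_
    exact zpow_le_zpow_right₀ hu.le (hexp t).1
  have hXY : T ωX ≤ u ^ 2 * T ωY := by
    rw [hT, hT, mul_sum]
    refine sum_le_sum fun t _ => ?_
    calc _ ≤ S₀ * u ^ (∑ i ∈ univ.filter (fun i : Fin n => (i : ℕ) < t), ωY i + 2) := by
          gcongr S₀ * ?_
          exact zpow_le_zpow_right₀ hu.le (hexp t).2
      _ = _ := by rw [zpow_add₀ hu0.ne']; norm_cast; ring
  have hYpos : 0 < T ωY := by rw [hT]; positivity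
  have hratio : T ωX / T ωY ≤ u ^ 2 := (div_le_iff₀ hYpos).2 hXY
  refine ⟨hratio, ?_⟩
  simpa [Real.log_pow] using abs_log_sub_log_le_log_of_le_of_div_le hYpos hYX hratio

/-- If two paths `ωX, ωY` through the binomial tree (steps `±1`, uptick factor
`u`, downtick `d = 1/u`) differ in exactly one step, where `ωX` has an uptick
and `ωY` a downtick, then the running totals `T_n(ω) = Σ_{t=0}^n S₀ u^{Σ_{i≤t} ω_i}`
satisfy `T_n(ωX)/T_n(ωY) ≤ u²` and `|ln T_n(ωX) − ln T_n(ωY)| ≤ 2 ln u`. -/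
theorem running_total_bounded_difference (n : ℕ) (S₀ u : ℝ) (hS₀ : 0 < S₀) (hu : 1 < u)
    (ωX ωY : Fin n → ℤ)
    (hX : ∀ i, ωX i = 1 ∨ ωX i = -1) (hY : ∀ i, ωY i = 1 ∨ ωY i = -1)
    (j : Fin n) (hjX : ωX j = 1) (hjY : ωY j = -1)
    (hother : ∀ i, i ≠ j → ωX i = ωY i)
    (T : (Fin n → ℤ) → ℝ)
    (hT : ∀ ω, T ω = ∑ t ∈ Finset.range (n + 1),
        S₀ * u ^ (∑ i ∈ Finset.univ.filter (fun i : Fin n => (i : ℕ) < t), ω i)) :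
    T ωX / T ωY ≤ u ^ 2 ∧
    |Real.log (T ωX) - Real.log (T ωY)| ≤ 2 * Real.log u :=
  running_total_bounded_difference_general n S₀ u hS₀ hu ωX ωY j hjX hjY hother T hT
end

section
/- Let T_n be the running total of stock prices in the binomial model with uptick factor u = e^{σ/√n}, and let C = e^{E(ln T_n)}. Then for any λ > 0, P(T_n ≤ C e^{−σλ} or T_n ≥ C e^{σλ}) ≤ 2 e^{−λ²/2}. -/
/-!
Encode a path as a vector of signs `x : Fin n → Bool`. Changing one sign changes every partial
sum of the path by at most `2`, hence every price `S₀ u^{…}` by a factor in `[u⁻², u²]`, and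
therefore `log T` by at most `2 log u = 2σ/√n`. McDiarmid's inequality — Hoeffding's lemma in one
coordinate, then induction on the number of coordinates through Fubini — makes
`log T - E[log T]` sub-Gaussian with variance proxy `n (σ/√n)² = σ²`, and the Chernoff bound at
`σλ` on both tails gives `2 e^{-λ²/2}`.
-/

open MeasureTheory ProbabilityTheory Real
open scoped NNReal

def BoundedDifferences {ι : Type*} [DecidableEq ι] {α : ι → Type*} (f : (∀ i, α i) → ℝ)
    (c : ι → ℝ≥0) : Prop :=
  ∀ x i a, |f (Function.update x i a) - f x| ≤ c i

namespace BoundedDifferences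

theorem abs_sub_le_sum {ι : Type*} [Fintype ι] [DecidableEq ι] {α : ι → Type*}
    {f : (∀ i, α i) → ℝ} {c : ι → ℝ≥0} (hf : BoundedDifferences f c) (x y : ∀ i, α i) :
    |f y - f x| ≤ ∑ i, (c i : ℝ) := by
  suffices ∀ s : Finset ι, |f (s.piecewise y x) - f x| ≤ ∑ i ∈ s, (c i : ℝ) by
    simpa using this Finset.univ
  intro s
  induction s using Finset.induction_on with
  | empty => simp
  | insert j s hj ih =>
    rw [Finset.piecewise_insert, Finset.sum_insert hj]
    calc |f (Function.update (s.piecewise y x) j (y j)) - f x|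
        ≤ |f (Function.update (s.piecewise y x) j (y j)) - f (s.piecewise y x)|
          + |f (s.piecewise y x) - f x| := abs_sub_le _ _ _
      _ ≤ c j + ∑ i ∈ s, (c i : ℝ) := add_le_add (hf _ _ _) ih

theorem integral_insertNth {n : ℕ} {α : Fin (n + 1) → Type*} {p : Fin (n + 1)}
    {mα : MeasurableSpace (α p)} {ν : Measure (α p)} [IsProbabilityMeasure ν]
    {f : (∀ i, α i) → ℝ} {c : Fin (n + 1) → ℝ≥0} (hfc : BoundedDifferences f c)
    (h_int : ∀ y, Integrable (fun x ↦ f (p.insertNth x y)) ν) :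
    BoundedDifferences (fun y ↦ ∫ x, f (p.insertNth x y) ∂ν) (fun j ↦ c (p.succAbove j)) := by
  intro y j b
  rw [← integral_sub (h_int _) (h_int _)]
  simpa using norm_integral_le_of_norm_le_const (μ := ν)
    (f := fun x ↦ f (p.insertNth x (Function.update y j b)) - f (p.insertNth x y))
    (ae_of_all _ fun x ↦ (Fin.insertNth_update p x j b y).symm ▸ hfc (p.insertNth x y) _ b)

end BoundedDifferences

namespace ProbabilityTheory

variable {Ω : Type*} {mΩ : MeasurableSpace Ω} {μ : Measure Ω}

theorem hasSubgaussianMGF_sub_integral_of_le_add [IsProbabilityMeasure μ] {g : Ω → ℝ}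
    (hg : AEMeasurable g μ) {c : ℝ≥0} (hgc : ∀ a b, g a ≤ g b + c) :
    HasSubgaussianMGF (fun ω ↦ g ω - μ[g]) ((c / 2) ^ 2) μ := by
  have hne : Nonempty Ω := nonempty_of_isProbabilityMeasure μ
  have hbdd : BddBelow (Set.range g) := ⟨g hne.some - c, by
    rintro _ ⟨ω, rfl⟩; linarith [hgc hne.some ω]⟩
  have hIcc (ω : Ω) : g ω ∈ Set.Icc (⨅ ω, g ω) ((⨅ ω, g ω) + c) := by
    have : g ω - c ≤ ⨅ ω, g ω := le_ciInf fun ω' ↦ by linarith [hgc ω ω']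
    exact ⟨ciInf_le hbdd ω, by linarith⟩
  convert hasSubgaussianMGF_of_mem_Icc hg (ae_of_all _ hIcc) using 3
  simp

theorem HasSubgaussianMGF.measure_abs_ge_le [IsFiniteMeasure μ] {X : Ω → ℝ} {c : ℝ≥0}
    (h : HasSubgaussianMGF X c μ) {ε : ℝ} (hε : 0 ≤ ε) :
    μ {ω | ε ≤ |X ω|} ≤ ENNReal.ofReal (2 * exp (-ε ^ 2 / (2 * c))) := by
  have h_union : {ω | ε ≤ |X ω|} = {ω | ε ≤ X ω} ∪ {ω | ε ≤ (-X) ω} := by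
    ext ω
    simp only [Set.mem_ofPred_eq, Set.mem_union, Pi.neg_apply, le_abs', le_neg]
    tauto
  have h_tail {Z : Ω → ℝ} (hZ : HasSubgaussianMGF Z c μ) :
      μ {ω | ε ≤ Z ω} ≤ ENNReal.ofReal (exp (-ε ^ 2 / (2 * c))) := by
    rw [← ofReal_measureReal]
    exact ENNReal.ofReal_le_ofReal (hZ.measure_ge_le hε)
  calc μ {ω | ε ≤ |X ω|} ≤ μ {ω | ε ≤ X ω} + μ {ω | ε ≤ (-X) ω} :=
        h_union ▸ measure_union_le _ _
    _ ≤ _ := add_le_add (h_tail h) (h_tail h.neg)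
    _ = ENNReal.ofReal (2 * exp (-ε ^ 2 / (2 * c))) := by
      rw [← ENNReal.ofReal_add (by positivity) (by positivity), ← two_mul]

theorem HasSubgaussianMGF.prod_sub_integral {β γ : Type*} {mβ : MeasurableSpace β}
    {mγ : MeasurableSpace γ} {ν : Measure β} {ρ : Measure γ} [IsFiniteMeasure ν]
    [IsFiniteMeasure ρ] {F : β × γ → ℝ} (hF : Measurable F) {M : ℝ}
    (hFM : ∀ z, |F z| ≤ M) {c₁ c₂ : ℝ≥0}
    (h_fiber : ∀ y, HasSubgaussianMGF (fun x ↦ F (x, y) - ∫ x', F (x', y) ∂ν) c₁ ν)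
    (h_avg : HasSubgaussianMGF
      (fun y ↦ ∫ x, F (x, y) ∂ν - ∫ y', ∫ x, F (x, y') ∂ν ∂ρ) c₂ ρ) :
    HasSubgaussianMGF (fun z ↦ F z - ∫ z', F z' ∂(ν.prod ρ)) (c₁ + c₂) (ν.prod ρ) := by
  set E := ∫ z, F z ∂(ν.prod ρ)
  have hFE : ∀ z, F z - E ∈ Set.Icc (-M - E) (M - E) := fun z ↦ by
    have := abs_le.1 (hFM z); constructor <;> linarith
  have h_int t : Integrable (fun z ↦ exp (t * (F z - E))) (ν.prod ρ) :=
    integrable_exp_mul_of_mem_Icc (hF.sub_const E).aemeasurable (ae_of_all _ hFE)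
  have hE : ∫ y, ∫ x, F (x, y) ∂ν ∂ρ = E :=
    (integral_prod_symm F (.of_bound hF.aestronglyMeasurable M (ae_of_all _ hFM))).symm
  rw [hE] at h_avg
  refine ⟨h_int, fun t ↦ ?_⟩
  calc mgf (fun z ↦ F z - E) (ν.prod ρ) t
      = ∫ y, exp (t * (∫ x, F (x, y) ∂ν - E))
          * mgf (fun x ↦ F (x, y) - ∫ x', F (x', y) ∂ν) ν t ∂ρ := by
        rw [mgf, integral_prod_symm _ (h_int t)]
        refine integral_congr_ae (ae_of_all _ fun y ↦ ?_)
        simp only [mgf, ← integral_const_mul, ← exp_add]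
        congr with x
        congr 1
        ring
    _ ≤ ∫ y, exp (t * (∫ x, F (x, y) ∂ν - E)) * exp (c₁ * t ^ 2 / 2) ∂ρ :=
        integral_mono_of_nonneg (ae_of_all _ fun y ↦ mul_nonneg (exp_pos _).le mgf_nonneg)
          ((h_avg.integrable_exp_mul t).mul_const _)
          (ae_of_all _ fun y ↦ mul_le_mul_of_nonneg_left ((h_fiber y).mgf_le t) (exp_pos _).le)
    _ ≤ exp (c₂ * t ^ 2 / 2) * exp (c₁ * t ^ 2 / 2) := by
        rw [integral_mul_const]
        gcongr
        exact h_avg.mgf_le t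
    _ = exp ((c₁ + c₂ : ℝ≥0) * t ^ 2 / 2) := by
        rw [← exp_add]; push_cast; ring_nf

/-- **McDiarmid's inequality**, in sub-Gaussian form. -/
theorem _root_.BoundedDifferences.hasSubgaussianMGF {n : ℕ} {α : Fin n → Type*}
    {mα : ∀ i, MeasurableSpace (α i)} (μ : ∀ i, Measure (α i)) [∀ i, IsProbabilityMeasure (μ i)]
    {f : (∀ i, α i) → ℝ} (hf : Measurable f) {c : Fin n → ℝ≥0} (hfc : BoundedDifferences f c) :
    HasSubgaussianMGF (fun x ↦ f x - ∫ y, f y ∂Measure.pi μ) (∑ i, (c i / 2) ^ 2)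
      (Measure.pi μ) := by
  induction n with
  | zero =>
    refine HasSubgaussianMGF.fun_zero.congr (ae_of_all _ fun x ↦ ?_)
    simp [integral_unique, Subsingleton.elim x default]
  | succ n ih =>
    -- Under `e`, `Measure.pi μ` becomes `μ 0 ⊗ Measure.pi (μ ∘ Fin.succ)`: Hoeffding's lemma
    -- controls each fiber, the induction hypothesis the fiber averages.
    set e := MeasurableEquiv.piFinSuccAbove α 0
    have he := measurePreserving_piFinSuccAbove μ 0
    let F : α 0 × (∀ j, α (Fin.succAbove 0 j)) → ℝ := fun z ↦ f (Fin.insertNth 0 z.1 z.2)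
    have hFe : F ∘ e = f := funext fun x ↦ congrArg f (e.symm_apply_apply x)
    have hF : Measurable F := hf.comp e.symm.measurable
    have hF_fiber y : Measurable fun x ↦ F (x, y) := hF.comp measurable_prodMk_right
    obtain ⟨x₀⟩ := nonempty_of_isProbabilityMeasure (Measure.pi μ)
    have hFM z : |F z| ≤ |f x₀| + ∑ i, (c i : ℝ) := by
      have := hfc.abs_sub_le_sum x₀ (Fin.insertNth 0 z.1 z.2)
      have := abs_sub_abs_le_abs_sub (f (Fin.insertNth 0 z.1 z.2)) (f x₀)
      linarith
    have h_fiber y : HasSubgaussianMGF (fun x ↦ F (x, y) - ∫ x', F (x', y) ∂μ 0)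
        ((c 0 / 2) ^ 2) (μ 0) := by
      refine hasSubgaussianMGF_sub_integral_of_le_add (hF_fiber y).aemeasurable fun a b ↦ ?_
      have := (abs_le.1 (hfc (Fin.insertNth 0 b y) 0 a)).2
      rw [Fin.update_insertNth] at this
      linarith
    have h_avg := ih (fun j ↦ μ (Fin.succAbove 0 j))
      (hF.stronglyMeasurable.integral_prod_left' (μ := μ 0)).measurable
      (hfc.integral_insertNth fun y ↦
        .of_bound (hF_fiber y).aestronglyMeasurable _
          (ae_of_all _ fun x ↦ (norm_eq_abs _).trans_le (hFM (x, y))))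
    have hE : ∫ z, F z ∂(μ 0).prod (Measure.pi fun j ↦ μ (Fin.succAbove 0 j))
        = ∫ x, f x ∂Measure.pi μ :=
      (he.integral_comp' F).symm.trans (integral_congr_ae (ae_of_all _ (congrFun hFe)))
    have h_map : HasSubgaussianMGF (fun z ↦ F z - ∫ x, f x ∂Measure.pi μ)
        ((c 0 / 2) ^ 2 + ∑ j, (c (Fin.succAbove 0 j) / 2) ^ 2) ((Measure.pi μ).map e) := by
      rw [he.map_eq, ← hE]
      exact HasSubgaussianMGF.prod_sub_integral hF hFM h_fiber h_avg
    rw [Fin.sum_univ_succAbove _ 0]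
    convert h_map.of_map e.measurable.aemeasurable using 1
    ext x
    exact congrArg (· - _) (congrFun hFe x).symm

theorem iIndepFun.hasSubgaussianMGF_of_boundedDifferences [IsProbabilityMeasure μ] {n : ℕ}
    {α : Fin n → Type*} {mα : ∀ i, MeasurableSpace (α i)} {Z : ∀ i, Ω → α i}
    (hZ : ∀ i, Measurable (Z i)) (hind : iIndepFun Z μ) {f : (∀ i, α i) → ℝ}
    (hf : Measurable f) {c : Fin n → ℝ≥0} (hfc : BoundedDifferences f c) :
    HasSubgaussianMGF (fun ω ↦ f (fun i ↦ Z i ω) - ∫ ω', f (fun i ↦ Z i ω') ∂μ)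
      (∑ i, (c i / 2) ^ 2) μ := by
  have := fun i ↦ Measure.isProbabilityMeasure_map (hZ i).aemeasurable (μ := μ)
  have hZ_vec : Measurable fun ω i ↦ Z i ω := measurable_pi_lambda _ hZ
  have h := hfc.hasSubgaussianMGF (fun i ↦ μ.map (Z i)) hf
  rw [← hind.map_fun_eq_pi_map fun i ↦ (hZ i).aemeasurable,
    integral_map hZ_vec.aemeasurable hf.aestronglyMeasurable] at h
  exact h.of_map hZ_vec.aemeasurable

end ProbabilityTheory

theorem Real.log_sum_sub_log_sum_le {ι : Type*} {s : Finset ι} (hs : s.Nonempty) {a b : ι → ℝ}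
    (ha : ∀ t ∈ s, 0 < a t) (hb : ∀ t ∈ s, 0 < b t) {δ : ℝ}
    (h : ∀ t ∈ s, log (a t) - log (b t) ≤ δ) :
    log (∑ t ∈ s, a t) - log (∑ t ∈ s, b t) ≤ δ := by
  have hle : ∑ t ∈ s, a t ≤ exp δ * ∑ t ∈ s, b t := by
    rw [Finset.mul_sum]
    refine Finset.sum_le_sum fun t ht ↦ ?_
    rw [← log_le_log_iff (ha t ht) (by positivity [hb t ht]),
      log_mul (exp_pos _).ne' (hb t ht).ne', log_exp]
    linarith [h t ht]
  have := log_le_log (Finset.sum_pos ha hs) hle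
  rw [log_mul (exp_pos _).ne' (Finset.sum_pos hb hs).ne', log_exp] at this
  linarith

theorem Real.abs_log_sum_sub_log_sum_le {ι : Type*} {s : Finset ι} (hs : s.Nonempty)
    {a b : ι → ℝ} (ha : ∀ t ∈ s, 0 < a t) (hb : ∀ t ∈ s, 0 < b t) {δ : ℝ}
    (h : ∀ t ∈ s, |log (a t) - log (b t)| ≤ δ) :
    |log (∑ t ∈ s, a t) - log (∑ t ∈ s, b t)| ≤ δ :=
  abs_sub_le_iff.2
    ⟨log_sum_sub_log_sum_le hs ha hb fun t ht ↦ (abs_sub_le_iff.1 (h t ht)).1,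
      log_sum_sub_log_sum_le hs hb ha fun t ht ↦ (abs_sub_le_iff.1 (h t ht)).2⟩

theorem Real.le_abs_log_sub_of_le_or_le {x m a : ℝ} (hx : 0 < x)
    (h : x ≤ exp m * exp (-a) ∨ exp m * exp a ≤ x) : a ≤ |log x - m| := by
  rw [← exp_add, ← exp_add] at h
  rw [le_abs']
  rcases h with h | h
  · have := log_le_log hx h
    rw [log_exp] at this
    left; linarith
  · have := log_le_log (exp_pos _) h
    rw [log_exp] at this
    right; linarith

noncomputable def runningTotal (S₀ u : ℝ) {n : ℕ} (y : Fin n → ℝ) : ℝ :=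
  ∑ t ∈ Finset.range (n + 1), S₀ * u ^ (∑ i ∈ Finset.univ.filter (fun i : Fin n ↦ (i : ℕ) < t), y i)

def spin : Bool → ℝ
  | true => 1
  | false => -1

section RunningTotal

variable {S₀ u : ℝ} {n : ℕ}

theorem runningTotal_pos (hS₀ : 0 < S₀) (hu : 0 < u) (y : Fin n → ℝ) :
    0 < runningTotal S₀ u y :=
  Finset.sum_pos (fun t _ ↦ by positivity) ⟨0, by simp⟩

theorem abs_log_runningTotal_update_sub_le (hS₀ : 0 < S₀) (hu : 0 < u) (y : Fin n → ℝ)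
    (i : Fin n) (a : ℝ) :
    |log (runningTotal S₀ u (Function.update y i a)) - log (runningTotal S₀ u y)|
      ≤ |log u| * |a - y i| := by
  have h_exponent (s : Finset (Fin n)) :
      |∑ k ∈ s, Function.update y i a k - ∑ k ∈ s, y k| ≤ |a - y i| := by
    have (k : Fin n) : Function.update y i a k - y k = if k = i then a - y i else 0 := by
      rcases eq_or_ne k i with rfl | hk <;> simp [*]
    rw [← Finset.sum_sub_distrib, Finset.sum_congr rfl fun k _ ↦ this k, Finset.sum_ite_eq']
    split_ifs <;> simp
  refine abs_log_sum_sub_log_sum_le ⟨0, by simp⟩ (fun t _ ↦ by positivity)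
    (fun t _ ↦ by positivity) fun t _ ↦ ?_
  rw [log_mul hS₀.ne' (by positivity), log_mul hS₀.ne' (by positivity), log_rpow hu,
    log_rpow hu, add_sub_add_left_eq_sub, ← sub_mul, abs_mul, mul_comm]
  exact mul_le_mul_of_nonneg_left (h_exponent _) (abs_nonneg _)

theorem spin_decide_eq {r : ℝ} (hr : r = 1 ∨ r = -1) : spin (decide (r = 1)) = r := by
  rcases hr with rfl | rfl <;> norm_num [spin]

theorem abs_spin_sub_spin_le (a b : Bool) : |spin a - spin b| ≤ 2 := by
  cases a <;> cases b <;> norm_num [spin]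

theorem boundedDifferences_log_runningTotal_spin (hS₀ : 0 < S₀) (hu : 0 < u) :
    BoundedDifferences (fun x : Fin n → Bool ↦ log (runningTotal S₀ u fun i ↦ spin (x i)))
      (fun _ ↦ 2 * ‖log u‖₊) := by
  intro x i a
  have h_update : (fun k ↦ spin (Function.update x i a k))
      = Function.update (fun k ↦ spin (x k)) i (spin a) :=
    funext (Function.apply_update (fun _ ↦ spin) x i a)
  calc _ ≤ |log u| * |spin a - spin (x i)| := by
        simpa only [h_update] using
          abs_log_runningTotal_update_sub_le hS₀ hu (fun k ↦ spin (x k)) i (spin a)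
    _ ≤ |log u| * 2 := by gcongr; exact abs_spin_sub_spin_le _ _
    _ = _ := by push_cast [coe_nnnorm, Real.norm_eq_abs]; ring

end RunningTotal

theorem running_total_concentration_general {Ω : Type*} [MeasureSpace Ω]
    [IsProbabilityMeasure (ℙ : Measure Ω)]
    (n : ℕ) (hn : 0 < n) (σ S₀ u : ℝ) (hσ : 0 < σ) (hS₀ : 0 < S₀)
    (Y : Fin n → Ω → ℝ) (hYmeas : ∀ i, Measurable (Y i))
    (hind : iIndepFun Y ℙ)
    (hval : ∀ i ω, Y i ω = 1 ∨ Y i ω = -1)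
    (hu : u = Real.exp (σ / Real.sqrt n))
    (T : Ω → ℝ)
    (hT : ∀ ω, T ω = ∑ t ∈ Finset.range (n + 1),
      S₀ * u ^ (∑ i ∈ Finset.univ.filter (fun i : Fin n => (i : ℕ) < t), Y i ω))
    (C : ℝ) (hC : C = Real.exp (∫ ω, Real.log (T ω)))
    (lam : ℝ) (hlam : 0 < lam) :
    ℙ {ω | T ω ≤ C * Real.exp (-σ * lam) ∨ C * Real.exp (σ * lam) ≤ T ω} ≤
      ENNReal.ofReal (2 * Real.exp (-lam ^ 2 / 2)) := by
  have hu_pos : 0 < u := hu ▸ exp_pos _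
  have hT_spin ω : T ω = runningTotal S₀ u fun i ↦ spin (decide (Y i ω = 1)) := by
    rw [hT]
    exact congrArg (runningTotal S₀ u) (funext fun i ↦ (spin_decide_eq (hval i ω)).symm)
  have h_sign : Measurable fun r : ℝ ↦ decide (r = 1) :=
    measurable_to_bool (by simp [Set.preimage])
  have h_subG := (hind.comp _ fun _ ↦ h_sign).hasSubgaussianMGF_of_boundedDifferences
    (fun i ↦ h_sign.comp (hYmeas i)) Measurable.of_discrete
    (boundedDifferences_log_runningTotal_spin hS₀ hu_pos)
  simp only [Function.comp_apply, ← hT_spin] at h_subG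
  have h_proxy : ((∑ _ : Fin n, (2 * ‖log u‖₊ / 2) ^ 2 : ℝ≥0) : ℝ) = σ ^ 2 := by
    have : (n : ℝ) ≠ 0 := by positivity
    simp [hu, div_pow, sq_sqrt (Nat.cast_nonneg n), mul_div_cancel₀, this]
  calc ℙ {ω | T ω ≤ C * exp (-σ * lam) ∨ C * exp (σ * lam) ≤ T ω}
      ≤ ℙ {ω | σ * lam ≤ |log (T ω) - ∫ ω, log (T ω)|} := by
        refine measure_mono fun ω hω ↦ le_abs_log_sub_of_le_or_le ?_ ?_
        · exact hT_spin ω ▸ runningTotal_pos hS₀ hu_pos _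
        · rw [hC, neg_mul] at hω
          exact hω
    _ ≤ ENNReal.ofReal (2 * exp (-(σ * lam) ^ 2 / (2 * σ ^ 2))) :=
        h_proxy ▸ h_subG.measure_abs_ge_le (by positivity)
    _ = ENNReal.ofReal (2 * exp (-lam ^ 2 / 2)) := by
        congr 3
        field_simp

/-- Concentration of the running total: with i.i.d. `±1` steps `Y i`,
uptick factor `u = e^{σ/√n}`, stock prices `S_t = S₀ u^{Σ_{i≤t} Y_i}`,
running total `T_n = Σ_{t=0}^n S_t`, and `C = e^{E(ln T_n)}`, for any `λ > 0`,
`P(T_n ≤ C e^{−σλ} or T_n ≥ C e^{σλ}) ≤ 2 e^{−λ²/2}`. -/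
theorem running_total_concentration {Ω : Type*} [MeasureSpace Ω]
    [IsProbabilityMeasure (ℙ : Measure Ω)]
    (n : ℕ) (hn : 0 < n) (σ S₀ p u : ℝ) (hσ : 0 < σ) (hS₀ : 0 < S₀)
    (hp₀ : 0 ≤ p) (hp₁ : p ≤ 1)
    (Y : Fin n → Ω → ℝ) (hYmeas : ∀ i, Measurable (Y i))
    (hind : iIndepFun Y ℙ)
    (hval : ∀ i ω, Y i ω = 1 ∨ Y i ω = -1)
    (hYp : ∀ i, ℙ {ω | Y i ω = 1} = ENNReal.ofReal p)
    (hu : u = Real.exp (σ / Real.sqrt n))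
    (T : Ω → ℝ)
    (hT : ∀ ω, T ω = ∑ t ∈ Finset.range (n + 1),
      S₀ * u ^ (∑ i ∈ Finset.univ.filter (fun i : Fin n => (i : ℕ) < t), Y i ω))
    (C : ℝ) (hC : C = Real.exp (∫ ω, Real.log (T ω)))
    (lam : ℝ) (hlam : 0 < lam) :
    ℙ {ω | T ω ≤ C * Real.exp (-σ * lam) ∨ C * Real.exp (σ * lam) ≤ T ω} ≤
      ENNReal.ofReal (2 * Real.exp (-lam ^ 2 / 2)) :=
  running_total_concentration_general n hn σ S₀ u hσ hS₀ Y hYmeas hind hval hu T hT C hC lam hlam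
end

section
/- Variance bound for the capped payoff: Let T_n ≥ 0 satisfy the concentration bound P(T_n ≤ C e^{−σλ} or T_n ≥ C e^{σλ}) ≤ 2 e^{−λ²/2} for all λ > 0, where C = e^{E(ln T_n)}, σ > 0. Fix ε > 0 and λ_0 = √(2 ln(2/ε)) with λ_0 > 2σ. If (n+1)X ≥ C e^{−σλ_0}, then Var((T_n − (n+1)X)⁺) ≤ (n+1)² X² e^{4σλ_0} (1 + 2σε)/(λ_0 − 2σ). -/
/-!
Write `T = C e^L`. Since `x ↦ (x - K)⁺` is 1-Lipschitz, `Var (T - K)⁺ ≤ E((T - K)⁺ - (C - K)⁺)²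
≤ E(T - C)² ≤ C² E(e^{|L|} - 1)²`. The concentration hypothesis says that `V = |L| / σ` has the
tails `P(V ≥ t) ≤ 2 e^{-t²/2}`, and the layer-cake formula turns `E(e^{σV} - 1)²` into a Gaussian
moment, at most `2eσ e^{4σ²} ≤ e^{2σλ₀} / (λ₀ - 2σ)`. Finally `C e^{-σλ₀} ≤ (n + 1) X`.
-/

open MeasureTheory ProbabilityTheory Real Set Filter Topology

lemma exp_mul_sub_sq_div_two_eq (b t : ℝ) :
    exp (b * t - t ^ 2 / 2) = exp (b ^ 2 / 2) * exp (-(1 / 2) * (t - b) ^ 2) := by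
  rw [← exp_add]; ring_nf

lemma integrable_exp_mul_sub_sq_div_two (b : ℝ) :
    Integrable fun t : ℝ => exp (b * t - t ^ 2 / 2) := by
  simp_rw [exp_mul_sub_sq_div_two_eq b]
  exact ((integrable_exp_neg_mul_sq (by norm_num)).comp_sub_right b).const_mul _

lemma integrable_sub_mul_exp_mul_sub_sq_div_two (b : ℝ) :
    Integrable fun t : ℝ => (t - b) * exp (b * t - t ^ 2 / 2) := by
  simp_rw [exp_mul_sub_sq_div_two_eq b, mul_left_comm _ (exp _)]
  exact ((integrable_mul_exp_neg_mul_sq (by norm_num)).comp_sub_right b).const_mul _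

lemma integrable_mul_exp_mul_sub_sq_div_two (b : ℝ) :
    Integrable fun t : ℝ => t * exp (b * t - t ^ 2 / 2) := by
  refine ((integrable_sub_mul_exp_mul_sub_sq_div_two b).add
    ((integrable_exp_mul_sub_sq_div_two b).const_mul b)).congr (ae_of_all _ fun t => ?_)
  simp only [Pi.add_apply]; ring

lemma integral_Ioi_exp_mul_sub_sq_div_two_le (b : ℝ) :
    ∫ t in Ioi 0, exp (b * t - t ^ 2 / 2) ≤ √(2 * π) * exp (b ^ 2 / 2) :=
  calc ∫ t in Ioi 0, exp (b * t - t ^ 2 / 2)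
      ≤ ∫ t, exp (b * t - t ^ 2 / 2) :=
        setIntegral_le_integral (integrable_exp_mul_sub_sq_div_two b)
          (ae_of_all _ fun _ => (exp_pos _).le)
    _ = exp (b ^ 2 / 2) * ∫ x, exp (-(1 / 2) * x ^ 2) := by
        simp_rw [exp_mul_sub_sq_div_two_eq b, integral_const_mul]
        rw [integral_sub_right_eq_self (fun x => exp (-(1 / 2) * x ^ 2)) b]
    _ = √(2 * π) * exp (b ^ 2 / 2) := by
        rw [integral_gaussian, mul_comm]; norm_num [div_div_eq_mul_div, mul_comm]

lemma integral_Ioi_sub_mul_exp_mul_sub_sq_div_two (b : ℝ) :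
    ∫ t in Ioi 0, (t - b) * exp (b * t - t ^ 2 / 2) = 1 := by
  have hderiv : ∀ t ∈ Ici (0 : ℝ), HasDerivAt (fun t => -exp (b * t - t ^ 2 / 2))
      ((t - b) * exp (b * t - t ^ 2 / 2)) t := fun t _ => by
    have h : HasDerivAt (fun t => b * t - t ^ 2 / 2) (b - t) t :=
      (((hasDerivAt_id' t).const_mul b).sub ((hasDerivAt_pow 2 t).div_const 2)).congr_deriv
        (by norm_num)
    exact h.exp.neg.congr_deriv (by ring)
  have hsq : Tendsto (fun t : ℝ => (t - b) ^ 2 / 2) atTop atTop :=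
    ((tendsto_pow_atTop two_ne_zero).comp
      (tendsto_atTop_add_const_right _ (-b) tendsto_id)).atTop_div_const two_pos
  have hlim : Tendsto (fun t : ℝ => -exp (b * t - t ^ 2 / 2)) atTop (𝓝 (-0)) := by
    refine (tendsto_exp_atBot.comp ?_).neg
    refine (tendsto_atBot_add_const_left _ (b ^ 2 / 2) (tendsto_neg_atTop_atBot.comp hsq)).congr
      fun t => ?_
    simp only [Function.comp_apply]; ring
  rw [integral_Ioi_of_hasDerivAt_of_tendsto' hderiv
    (integrable_sub_mul_exp_mul_sub_sq_div_two b).integrableOn hlim]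
  simp

lemma integral_Ioi_mul_exp_mul_sub_sq_div_two_le {b : ℝ} (hb : 0 ≤ b) :
    ∫ t in Ioi 0, t * exp (b * t - t ^ 2 / 2) ≤ 1 + b * (√(2 * π) * exp (b ^ 2 / 2)) := by
  have hsplit : ∫ t in Ioi 0, t * exp (b * t - t ^ 2 / 2) =
      (∫ t in Ioi 0, (t - b) * exp (b * t - t ^ 2 / 2)) +
        b * ∫ t in Ioi 0, exp (b * t - t ^ 2 / 2) := by
    rw [← integral_const_mul, ← integral_add
      (integrable_sub_mul_exp_mul_sub_sq_div_two b).integrableOn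
      ((integrable_exp_mul_sub_sq_div_two b).integrableOn.const_mul b)]
    congr 1 with t
    ring
  rw [hsplit, integral_Ioi_sub_mul_exp_mul_sub_sq_div_two]
  gcongr
  exact integral_Ioi_exp_mul_sub_sq_div_two_le b

lemma gaussian_moment_bound_le_two_mul_exp_one_mul {σ : ℝ} (hσ : 0 ≤ σ) :
    4 * σ ^ 2 * (1 + 2 * σ * (√(2 * π) * exp (2 * σ ^ 2))) ≤
      2 * exp 1 * σ * exp (4 * σ ^ 2) := by
  set q := exp (2 * σ ^ 2)
  have hq : 1 + 2 * σ ^ 2 + 2 * σ ^ 4 ≤ q := by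
    have := quadratic_le_exp_of_nonneg (by positivity : 0 ≤ 2 * σ ^ 2); nlinarith
  have hq1 : 1 ≤ q := by nlinarith
  have hq2 : exp (4 * σ ^ 2) = q * q := by rw [← exp_add]; ring_nf
  have he : 2.718 ≤ exp 1 := by linarith [exp_one_gt_d9]
  have hs : √(2 * π) ≤ 2.5067 := (sqrt_le_left (by norm_num)).2 (by nlinarith [pi_lt_d6])
  -- With `e q ≥ e (1 + 2σ² + 2σ⁴)` and `√(2π) ≤ 2.5067` the claim reduces to this quartic.
  have hpoly : 2 * σ ≤ 2.718 - 4.5908 * σ ^ 2 + 5.436 * σ ^ 4 := by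
    nlinarith [sq_nonneg (σ ^ 2 - 0.55), sq_nonneg (σ - 0.74), sq_nonneg (σ ^ 2 - σ),
      sq_nonneg (σ + 0.5)]
  have h1 : 2 * σ ≤ exp 1 * q - 4 * σ ^ 2 * √(2 * π) := by
    nlinarith [mul_le_mul_of_nonneg_left hq (exp_pos 1).le,
      mul_le_mul_of_nonneg_right he (by positivity : 0 ≤ 1 + 2 * σ ^ 2 + 2 * σ ^ 4),
      mul_le_mul_of_nonneg_left hs (by positivity : 0 ≤ 4 * σ ^ 2)]
  have h2 : 2 * σ ≤ q * (exp 1 * q - 4 * σ ^ 2 * √(2 * π)) := by nlinarith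
  rw [hq2]
  nlinarith [mul_le_mul_of_nonneg_left h2 hσ]

lemma two_mul_exp_one_mul_le_exp_div {σ lam : ℝ} (hlam : 2 * σ < lam) :
    2 * exp 1 * σ * exp (4 * σ ^ 2) ≤ exp (2 * σ * lam) / (lam - 2 * σ) := by
  have hd : 0 < lam - 2 * σ := by linarith
  have hsplit : exp (2 * σ * lam) = exp (4 * σ ^ 2) * exp (2 * σ * (lam - 2 * σ)) := by
    rw [← exp_add]; ring_nf
  rw [le_div_iff₀ hd, hsplit]
  nlinarith [exp_one_mul_le_exp (x := 2 * σ * (lam - 2 * σ)), exp_pos (4 * σ ^ 2)]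

lemma abs_exp_sub_one_le (x : ℝ) : |exp x - 1| ≤ exp |x| - 1 := by
  rcases le_total 0 x with hx | hx
  · rw [abs_of_nonneg hx, abs_of_nonneg (by linarith [one_le_exp hx])]
  · rw [abs_of_nonpos hx, abs_of_nonpos (by linarith [exp_le_one_iff.2 hx])]
    linarith [add_one_le_exp x, add_one_le_exp (-x)]

lemma abs_sub_le_mul_exp_abs_log_div_sub_one {x C : ℝ} (hx : 0 < x) (hC : 0 < C) :
    |x - C| ≤ C * (exp |log (x / C)| - 1) := by
  have hxC : x = C * exp (log (x / C)) := by
    rw [exp_log (div_pos hx hC)]; field_simp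
  calc |x - C| = C * |exp (log (x / C)) - 1| := by
        conv_lhs => rw [hxC]
        rw [← mul_sub_one, abs_mul, abs_of_pos hC]
    _ ≤ C * (exp |log (x / C)| - 1) := by gcongr; exact abs_exp_sub_one_le _

section

variable {Ω : Type*} [MeasurableSpace Ω] {μ : Measure Ω}

lemma variance_le_of_lintegral_sq_sub_le [IsProbabilityMeasure μ] {Y : Ω → ℝ}
    (hY : AEStronglyMeasurable Y μ) (c : ℝ) {B : ℝ} (hB : 0 ≤ B)
    (h : ∫⁻ ω, ENNReal.ofReal ((Y ω - c) ^ 2) ∂μ ≤ ENNReal.ofReal B) : Var[Y; μ] ≤ B := by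
  rw [← variance_sub_const hY c]
  have hYc : AEStronglyMeasurable (fun ω => Y ω - c) μ := by fun_prop
  refine (variance_le_expectation_sq hYc).trans ?_
  change ∫ ω, (Y ω - c) ^ 2 ∂μ ≤ B
  rw [integral_eq_lintegral_of_nonneg_ae (ae_of_all _ fun ω => sq_nonneg _) (hYc.pow 2)]
  exact ENNReal.toReal_le_of_le_ofReal hB h

lemma lintegral_sq_exp_mul_sub_one_le {V : Ω → ℝ} {σ : ℝ} (hV : AEMeasurable V μ)
    (hV0 : 0 ≤ᵐ[μ] V) (hσ : 0 ≤ σ)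
    (htail : ∀ t > 0, μ {ω | t ≤ V ω} ≤ ENNReal.ofReal (2 * exp (-t ^ 2 / 2))) :
    ∫⁻ ω, ENNReal.ofReal ((exp (σ * V ω) - 1) ^ 2) ∂μ ≤
      ENNReal.ofReal (2 * exp 1 * σ * exp (4 * σ ^ 2)) := by
  set g : ℝ → ℝ := fun t => 2 * σ * exp (σ * t) * (exp (σ * t) - 1)
  have hg : Continuous g := by fun_prop
  have hFTC (v : ℝ) : ∫ t in 0..v, g t = (exp (σ * v) - 1) ^ 2 := by
    have hderiv (t : ℝ) : HasDerivAt (fun t => (exp (σ * t) - 1) ^ 2) (g t) t :=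
      ((((hasDerivAt_id' t).const_mul σ).exp.sub_const 1).pow 2).congr_deriv
        (by simp only [g]; ring)
    rw [intervalIntegral.integral_eq_sub_of_hasDerivAt (fun t _ => hderiv t)
      (hg.intervalIntegrable _ _)]
    simp
  have hg_nn : ∀ t ≥ 0, 0 ≤ g t := fun t ht =>
    mul_nonneg (by positivity) (sub_nonneg.2 (one_le_exp (mul_nonneg hσ ht)))
  -- `exp (σ t) - 1 ≤ σ t exp (σ t)` turns the tail bound into a Gaussian moment.
  have htail_g : ∀ t > 0,
      2 * exp (-t ^ 2 / 2) * g t ≤ 4 * σ ^ 2 * (t * exp (2 * σ * t - t ^ 2 / 2)) := by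
    intro t ht
    have h1 : exp (σ * t) - 1 ≤ σ * t * exp (σ * t) := by
      nlinarith [one_sub_le_exp_neg (σ * t), exp_neg (σ * t), exp_pos (σ * t),
        mul_inv_cancel₀ (exp_pos (σ * t)).ne']
    have hexp :
        exp (2 * σ * t - t ^ 2 / 2) = exp (σ * t) * exp (σ * t) * exp (-t ^ 2 / 2) := by
      rw [← exp_add, ← exp_add]; ring_nf
    rw [hexp]
    have := mul_le_mul_of_nonneg_left h1
      (by positivity : 0 ≤ 4 * σ * exp (σ * t) * exp (-t ^ 2 / 2))
    simp only [g]; nlinarith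
  have hmoment := integral_Ioi_mul_exp_mul_sub_sq_div_two_le (by positivity : 0 ≤ 2 * σ)
  calc ∫⁻ ω, ENNReal.ofReal ((exp (σ * V ω) - 1) ^ 2) ∂μ
      = ∫⁻ ω, ENNReal.ofReal (∫ t in 0..V ω, g t) ∂μ := by simp_rw [hFTC]
    _ = ∫⁻ t in Ioi 0, μ {ω | t ≤ V ω} * ENNReal.ofReal (g t) :=
        lintegral_comp_eq_lintegral_meas_le_mul μ hV0 hV (fun t _ => hg.intervalIntegrable _ _)
          ((ae_restrict_iff' measurableSet_Ioi).2 (ae_of_all _ fun t ht => hg_nn t (le_of_lt ht)))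
    _ ≤ ∫⁻ t in Ioi 0, ENNReal.ofReal (4 * σ ^ 2 * (t * exp (2 * σ * t - t ^ 2 / 2))) := by
        refine setLIntegral_mono (by fun_prop) fun t ht => ?_
        calc μ {ω | t ≤ V ω} * ENNReal.ofReal (g t)
            ≤ ENNReal.ofReal (2 * exp (-t ^ 2 / 2)) * ENNReal.ofReal (g t) := by
              gcongr; exact htail t ht
          _ ≤ _ := by
              rw [← ENNReal.ofReal_mul (by positivity)]
              exact ENNReal.ofReal_le_ofReal (htail_g t ht)
    _ = ENNReal.ofReal (4 * σ ^ 2 * ∫ t in Ioi 0, t * exp (2 * σ * t - t ^ 2 / 2)) := by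
        rw [← integral_const_mul, ofReal_integral_eq_lintegral_ofReal
          ((integrable_mul_exp_mul_sub_sq_div_two _).integrableOn.const_mul _)]
        exact (ae_restrict_iff' measurableSet_Ioi).2 (ae_of_all _ fun t ht => by
          have : (0 : ℝ) < t := ht
          positivity)
    _ ≤ ENNReal.ofReal (2 * exp 1 * σ * exp (4 * σ ^ 2)) := by
        rw [show (2 * σ) ^ 2 / 2 = 2 * σ ^ 2 by ring] at hmoment
        exact ENNReal.ofReal_le_ofReal ((mul_le_mul_of_nonneg_left hmoment (by positivity)).trans
          (gaussian_moment_bound_le_two_mul_exp_one_mul hσ))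

def IsLogConcentrated (μ : Measure Ω) (T : Ω → ℝ) (C σ : ℝ) : Prop :=
  ∀ lam : ℝ, 0 < lam →
    μ {ω | T ω ≤ C * exp (-σ * lam) ∨ C * exp (σ * lam) ≤ T ω} ≤
      ENNReal.ofReal (2 * exp (-lam ^ 2 / 2))

namespace IsLogConcentrated

variable {T : Ω → ℝ} {C σ : ℝ}

lemma ae_pos (hC : 0 ≤ C) (h : IsLogConcentrated μ T C σ) : ∀ᵐ ω ∂μ, 0 < T ω := by
  have hlim : Tendsto (fun lam : ℝ => ENNReal.ofReal (2 * exp (-lam ^ 2 / 2))) atTop (𝓝 0) := by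
    have := ((tendsto_exp_atBot.comp ((tendsto_neg_atTop_atBot.comp
      (tendsto_pow_atTop two_ne_zero)).atBot_div_const two_pos)).const_mul 2)
    simpa [Function.comp_def, neg_div] using ENNReal.tendsto_ofReal this
  have hnull : μ {ω | T ω ≤ 0} = 0 := nonpos_iff_eq_zero.1 <| ge_of_tendsto hlim <|
    (eventually_gt_atTop 0).mono fun lam hlam =>
      (measure_mono fun ω hω => Or.inl (le_trans hω (by positivity))).trans (h lam hlam)
  simpa [ae_iff] using hnull

lemma measure_le_abs_log_div_le (hC : 0 < C) (hσ : 0 < σ) (h : IsLogConcentrated μ T C σ)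
    {t : ℝ} (ht : 0 < t) :
    μ {ω | t ≤ |log (T ω / C)| / σ} ≤ ENNReal.ofReal (2 * exp (-t ^ 2 / 2)) := by
  refine (measure_mono_ae ?_).trans (h t ht)
  filter_upwards [h.ae_pos hC.le] with ω hω hle
  have hTC : T ω = C * exp (log (T ω / C)) := by
    rw [exp_log (div_pos hω hC)]; field_simp
  change t ≤ |log (T ω / C)| / σ at hle
  rw [le_div_iff₀ hσ, mul_comm, le_abs] at hle
  change T ω ≤ C * exp (-σ * t) ∨ C * exp (σ * t) ≤ T ω
  rw [hTC, neg_mul]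
  rcases hle with hle | hle
  · exact Or.inr (by gcongr)
  · exact Or.inl (by gcongr; linarith)

lemma lintegral_sq_sub_le (hT : AEMeasurable T μ) (hC : 0 < C) (hσ : 0 < σ)
    (h : IsLogConcentrated μ T C σ) :
    ∫⁻ ω, ENNReal.ofReal ((T ω - C) ^ 2) ∂μ ≤
      ENNReal.ofReal (C ^ 2 * (2 * exp 1 * σ * exp (4 * σ ^ 2))) := by
  set V : Ω → ℝ := fun ω => |log (T ω / C)| / σ
  have hV : AEMeasurable V μ := by fun_prop
  have hσV (ω : Ω) : σ * V ω = |log (T ω / C)| := mul_div_cancel₀ _ hσ.ne'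
  have hbound := lintegral_sq_exp_mul_sub_one_le hV (ae_of_all _ fun ω => by positivity) hσ.le
    fun t ht => h.measure_le_abs_log_div_le hC hσ ht
  calc ∫⁻ ω, ENNReal.ofReal ((T ω - C) ^ 2) ∂μ
      ≤ ∫⁻ ω, ENNReal.ofReal (C ^ 2) * ENNReal.ofReal ((exp (σ * V ω) - 1) ^ 2) ∂μ := by
        refine lintegral_mono_ae ?_
        filter_upwards [h.ae_pos hC.le] with ω hω
        rw [← ENNReal.ofReal_mul (sq_nonneg _), ← mul_pow, hσV]
        exact ENNReal.ofReal_le_ofReal (sq_le_sq.2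
          ((abs_sub_le_mul_exp_abs_log_div_sub_one hω hC).trans (le_abs_self _)))
    _ ≤ _ := by
        rw [lintegral_const_mul' _ _ ENNReal.ofReal_ne_top, ENNReal.ofReal_mul (sq_nonneg _)]
        gcongr

end IsLogConcentrated

end

theorem capped_payoff_variance_bound_general {Ω : Type*} [MeasureSpace Ω]
    [IsProbabilityMeasure (ℙ : Measure Ω)]
    (T : Ω → ℝ) (hTm : Measurable T)
    (n : ℕ) (X σ ε lam₀ C : ℝ) (hσ : 0 < σ) (hε : 0 < ε)
    (hC : C = Real.exp (∫ ω, Real.log (T ω)))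
    (hconc : ∀ lam : ℝ, 0 < lam →
      ℙ {ω | T ω ≤ C * Real.exp (-σ * lam) ∨ C * Real.exp (σ * lam) ≤ T ω} ≤
        ENNReal.ofReal (2 * Real.exp (-lam ^ 2 / 2)))
    (hlam₀σ : 2 * σ < lam₀)
    (hbarrier : C * Real.exp (-σ * lam₀) ≤ (n + 1) * X) :
    variance (fun ω => max (T ω - (n + 1) * X) 0) ℙ ≤
      (n + 1) ^ 2 * X ^ 2 * Real.exp (4 * σ * lam₀) * (1 + 2 * σ * ε) / (lam₀ - 2 * σ) := by
  have hC0 : 0 < C := hC ▸ exp_pos _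
  have hd : 0 < lam₀ - 2 * σ := by linarith
  have hvar : variance (fun ω => max (T ω - (n + 1) * X) 0) ℙ ≤
      C ^ 2 * (2 * exp 1 * σ * exp (4 * σ ^ 2)) := by
    refine variance_le_of_lintegral_sq_sub_le (by fun_prop) (max (C - (n + 1) * X) 0)
      (by positivity) ((lintegral_mono fun ω => ENNReal.ofReal_le_ofReal (sq_le_sq.2 ?_)).trans
        (IsLogConcentrated.lintegral_sq_sub_le hTm.aemeasurable hC0 hσ hconc))
    simpa using abs_max_sub_max_le_abs (T ω - (n + 1) * X) (C - (n + 1) * X) 0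
  have hexp : exp (2 * σ * lam₀) = exp (-σ * lam₀) ^ 2 * exp (4 * σ * lam₀) := by
    rw [sq, ← exp_add, ← exp_add]; ring_nf
  calc variance (fun ω => max (T ω - (n + 1) * X) 0) ℙ
      ≤ C ^ 2 * (exp (2 * σ * lam₀) / (lam₀ - 2 * σ)) := by
        refine hvar.trans ?_
        gcongr
        exact two_mul_exp_one_mul_le_exp_div hlam₀σ
    _ = (C * exp (-σ * lam₀)) ^ 2 * exp (4 * σ * lam₀) / (lam₀ - 2 * σ) := by
        rw [hexp]; ring
    _ ≤ ((n + 1) * X) ^ 2 * exp (4 * σ * lam₀) / (lam₀ - 2 * σ) := by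
        gcongr
    _ ≤ (n + 1) ^ 2 * X ^ 2 * exp (4 * σ * lam₀) * (1 + 2 * σ * ε) / (lam₀ - 2 * σ) := by
        rw [mul_pow]
        refine div_le_div_of_nonneg_right (le_mul_of_one_le_right (by positivity) ?_) hd.le
        linarith [mul_pos hσ hε]

/-- Variance bound for the capped payoff: suppose the nonnegative running total
`T_n` satisfies the concentration bound
`P(T_n ≤ C e^{−σλ} or T_n ≥ C e^{σλ}) ≤ 2 e^{−λ²/2}` for all `λ > 0`, where
`C = e^{E(ln T_n)}` and `σ > 0`.  Fix `ε > 0` and `λ₀ = √(2 ln(2/ε))` with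
`λ₀ > 2σ`.  If `(n+1)X ≥ C e^{−σλ₀}`, then
`Var((T_n − (n+1)X)⁺) ≤ (n+1)² X² e^{4σλ₀} (1 + 2σε)/(λ₀ − 2σ)`. -/
theorem capped_payoff_variance_bound {Ω : Type*} [MeasureSpace Ω]
    [IsProbabilityMeasure (ℙ : Measure Ω)]
    (T : Ω → ℝ) (hTm : Measurable T) (hTnn : ∀ ω, 0 ≤ T ω)
    (hT2 : Integrable (fun ω => T ω ^ 2))
    (n : ℕ) (X σ ε lam₀ C : ℝ) (hX : 0 < X) (hσ : 0 < σ) (hε : 0 < ε)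
    (hC : C = Real.exp (∫ ω, Real.log (T ω)))
    (hconc : ∀ lam : ℝ, 0 < lam →
      ℙ {ω | T ω ≤ C * Real.exp (-σ * lam) ∨ C * Real.exp (σ * lam) ≤ T ω} ≤
        ENNReal.ofReal (2 * Real.exp (-lam ^ 2 / 2)))
    (hlam₀ : lam₀ = Real.sqrt (2 * Real.log (2 / ε)))
    (hlam₀σ : 2 * σ < lam₀)
    (hbarrier : C * Real.exp (-σ * lam₀) ≤ (n + 1) * X) :
    variance (fun ω => max (T ω - (n + 1) * X) 0) ℙ ≤
      (n + 1) ^ 2 * X ^ 2 * Real.exp (4 * σ * lam₀) * (1 + 2 * σ * ε) / (lam₀ - 2 * σ) :=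
  capped_payoff_variance_bound_general T hTm n X σ ε lam₀ C hσ hε hC hconc hlam₀σ hbarrier
end

section
/- Error bound for RecBTT parameter choice: Let R > 2 be an integer, γ = 1/R, n_i = (n_0/σ²)^{1/2 − iγ} and k_i = 4^i k_0 (n_0/σ²)^{iγ} for 0 ≤ i ≤ K where K = 1/(2γ) (so n_K = 1), with terminal error E_K = B/k_K = σB/(4^K k_0 √n_0). Then the total error E_0 = 5B n_0 Σ_{i=1}^K 2^{i−1}/(k_{i−1} n_i) + 2^K n_0 E_K satisfies E_0 = O(σ^{1−2γ} B n_0^{1/2+γ}/k_0). -/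
/-!
Put `x = n₀/σ²` and `P = x^{1/2-γ}`. The exponents of `k_j` and `n_{j+1}` add up to `1/2 - γ`
whatever `j` is, so `k_j n_{j+1} = 4^j k₀ P` and the sum is a geometric series in `1/2`, bounded
by `2/(k₀ P)`. The terminal term is `σ √n₀ B / (2^K k₀) = (n₀/x^{1/2}) B / (2^K k₀)`, which is at
most `(n₀/P) B/k₀` because `x ≥ 1`. Finally `n₀/P = σ^{1-2γ} n₀^{1/2+γ}`.
-/

open Finset Real

lemma div_rpow_div_sq {a b : ℝ} (ha : 0 < a) (hb : 0 < b) (t : ℝ) :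
    a / (a / b ^ 2) ^ t = b ^ (2 * t) * a ^ (1 - t) := by
  rw [div_rpow ha.le (by positivity), ← rpow_natCast b 2, ← rpow_mul hb.le, rpow_sub ha,
    rpow_one]
  push_cast
  field_simp

lemma div_sqrt_div_sq {a b : ℝ} (ha : 0 < a) (hb : 0 < b) :
    a / (a / b ^ 2) ^ (1 / 2 : ℝ) = b * √a := by
  rw [div_rpow_div_sq ha hb, sqrt_eq_rpow]
  norm_num

lemma rpow_mul_add_rpow_sub_succ_mul {x : ℝ} (hx : 0 < x) (s γ : ℝ) (j : ℕ) :
    x ^ ((j : ℝ) * γ) * x ^ (s - ((j + 1 : ℕ) : ℝ) * γ) = x ^ (s - γ) := by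
  rw [← rpow_add hx]
  push_cast
  ring_nf

lemma sum_two_pow_div_four_pow_mul_le {c : ℝ} (hc : 0 ≤ c) (K : ℕ) :
    ∑ j ∈ range K, (2 : ℝ) ^ j / (4 ^ j * c) ≤ 2 / c := by
  have hterm : ∀ j : ℕ, (2 : ℝ) ^ j / (4 ^ j * c) = (1 / 2) ^ j / c := fun j => by
    rw [show (4 : ℝ) ^ j = 2 ^ j * 2 ^ j by rw [← mul_pow]; norm_num, one_div_pow]
    field_simp
  simp only [hterm, ← sum_div]
  exact div_le_div_of_nonneg_right (by simpa using sum_geometric_two_le K) hc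

lemma two_pow_mul_div_four_pow_le {n₀ σ B k₀ : ℝ} (hn₀ : 0 < n₀) (hσ : 0 < σ) (hB : 0 ≤ B)
    (hk₀ : 0 < k₀) (K : ℕ) :
    2 ^ K * n₀ * (σ * B / (4 ^ K * k₀ * √n₀)) ≤ B * (n₀ / (n₀ / σ ^ 2) ^ (1 / 2 : ℝ)) / k₀ := by
  have hsq := sq_sqrt hn₀.le
  have heq : 2 ^ K * n₀ * (σ * B / (4 ^ K * k₀ * √n₀)) = B * (σ * √n₀) / k₀ / 2 ^ K := by
    rw [show (4 : ℝ) ^ K = 2 ^ K * 2 ^ K by rw [← mul_pow]; norm_num]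
    field_simp
    linear_combination -B * hsq
  rw [heq, div_sqrt_div_sq hn₀ hσ]
  exact div_le_self (by positivity) (one_le_pow₀ (by norm_num))

/-- Error bound for the RecBTT parameter choice: for an integer `R = 2K > 2`,
`γ = 1/R`, subproblem sizes `n_i = (n₀/σ²)^{1/2 − iγ}` and bucket counts
`k_i = 4^i k₀ (n₀/σ²)^{iγ}` (so `n_K = 1`), and terminal error
`E_K = σB/(4^K k₀ √n₀)`, the total error
`E₀ = 5B n₀ Σ_{j=0}^{K-1} 2^j/(k_j n_{j+1}) + 2^K n₀ E_K` satisfies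
`E₀ = O(σ^{1−2γ} B n₀^{1/2+γ}/k₀)`. -/
theorem recBTT_error_bound :
    ∃ c : ℝ, 0 < c ∧ ∀ (B σ k₀ n₀ : ℝ) (K : ℕ),
      0 < B → 0 < σ → 0 < k₀ → σ ^ 2 ≤ n₀ → 2 ≤ K →
      ∀ γ : ℝ, γ = 1 / (2 * K) →
      ∀ nn kk : ℕ → ℝ,
        (∀ i : ℕ, nn i = (n₀ / σ ^ 2) ^ ((1 : ℝ) / 2 - i * γ)) →
        (∀ i : ℕ, kk i = 4 ^ i * k₀ * (n₀ / σ ^ 2) ^ ((i : ℝ) * γ)) →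
      ∀ EK : ℝ, EK = σ * B / (4 ^ K * k₀ * Real.sqrt n₀) →
      5 * B * n₀ * (∑ j ∈ Finset.range K, 2 ^ j / (kk j * nn (j + 1))) +
          2 ^ K * n₀ * EK ≤
        c * (σ ^ ((1 : ℝ) - 2 * γ) * B * n₀ ^ ((1 : ℝ) / 2 + γ) / k₀) := by
  refine ⟨11, by norm_num, ?_⟩
  intro B σ k₀ n₀ K hB hσ hk₀ hσn₀ hK γ hγ nn kk hnn hkk EK hEK
  have hn₀ : 0 < n₀ := (by positivity : 0 < σ ^ 2).trans_le hσn₀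
  set x := n₀ / σ ^ 2
  have hx₁ : 1 ≤ x := (one_le_div (by positivity)).2 hσn₀
  set P := x ^ ((1 : ℝ) / 2 - γ)
  have hγ₀ : 0 ≤ γ := by rw [hγ]; positivity
  have hP : 0 < P := by positivity
  have hscale : σ ^ ((1 : ℝ) - 2 * γ) * B * n₀ ^ ((1 : ℝ) / 2 + γ) / k₀ = B * (n₀ / P) / k₀ := by
    rw [div_rpow_div_sq hn₀ hσ]
    ring_nf
  have hprod : ∀ j, kk j * nn (j + 1) = 4 ^ j * (k₀ * P) := fun j => by
    rw [hkk, hnn, mul_assoc, rpow_mul_add_rpow_sub_succ_mul (by positivity)]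
    ring
  have hsum : ∑ j ∈ range K, 2 ^ j / (kk j * nn (j + 1)) ≤ 2 / (k₀ * P) := by
    simpa only [hprod] using sum_two_pow_div_four_pow_mul_le (by positivity) K
  have hterminal : 2 ^ K * n₀ * EK ≤ B * (n₀ / P) / k₀ := by
    rw [hEK]
    refine (two_pow_mul_div_four_pow_le hn₀ hσ hB.le hk₀ K).trans ?_
    gcongr
    exact rpow_le_rpow_of_exponent_le hx₁ (by linarith)
  have hfirst : 5 * B * n₀ * (∑ j ∈ range K, 2 ^ j / (kk j * nn (j + 1))) ≤
      10 * (B * (n₀ / P) / k₀) := by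
    calc _ ≤ 5 * B * n₀ * (2 / (k₀ * P)) := by gcongr
      _ = _ := by field_simp; ring
  rw [hscale]
  linarith
end
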